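/- arXiv:1609.06509 — 2 statements merged into one kernel-verified Lean document; each statement's English description precedes it below -/
import Mathlib

section
/- Let (x_k) be a block sequence in X_ius with ‖x_k‖_K̃ ≤ σ_k for all k, let f ∈ K and let (f_α)_{α∈A} be a tree of f. Set y_k = x_k restricted to ∪_{α∈F_f} supp(f_α). Then |f(y_k)| ≤ 2σ_k for every k. -/
open scoped BigOperators
open Classical

noncomputable section

/-- `c00`: the finitely supported real sequences on `ℕ`. -/
abbrev c00 : Type := ℕ →₀ ℝ

namespace Ius

/-- The unit vector `e_k` (also written `e_k^*` when viewed as a functional). -/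
def e (k : ℕ) : c00 := Finsupp.single k 1

/-- The pairing `f(x) = ∑ k, f k * x k`. -/
def dot (f x : c00) : ℝ := x.sum fun k v => f k * v

/-- Every element of `A` is smaller than every element of `B`. -/
def suppLt (A B : Finset ℕ) : Prop := ∀ a ∈ A, ∀ b ∈ B, a < b

/-- `x < y` for finitely supported vectors: `max supp x < min supp y`. -/
def blockLt (x y : c00) : Prop := suppLt x.support y.support

/-- `max supp x` (junk value `0` if the support is empty). -/
def maxSupp (x : c00) : ℕ := WithBot.unbotD 0 x.support.max

/-- `min supp x` (junk value `0` if the support is empty). -/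
def minSupp (x : c00) : ℕ := WithTop.untopD 0 x.support.min

/-- `range x`: the smallest integer interval containing `supp x`. -/
def rangeI (x : c00) : Finset ℕ :=
  if h : x.support.Nonempty then Finset.Icc (x.support.min' h) (x.support.max' h) else ∅

/-- `E ⊆ ℕ` is an interval. -/
def IsInterval (E : Set ℕ) : Prop := ∀ a ∈ E, ∀ b ∈ E, ∀ c : ℕ, a ≤ c → c ≤ b → c ∈ E

/-- Restriction `E x` of a vector `x` to a set of coordinates `E`. -/
def restrictTo (E : Set ℕ) (x : c00) : c00 :=
  letI := Classical.decPred fun k => k ∈ E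
  Finsupp.filter (fun k => k ∈ E) x

/-- A block sequence: successive nonzero vectors. -/
def IsBlockSeq (x : ℕ → c00) : Prop := ∀ k, x k ≠ 0 ∧ blockLt (x k) (x (k + 1))

/-- A vector with rational coordinates. -/
def IsRat (x : c00) : Prop := ∀ k, ∃ q : ℚ, x k = (q : ℝ)

/-- The set `Q`: finitely supported, nonzero rational sequences with sup-norm at most 1. -/
def Qset : Set c00 := {x | x ≠ 0 ∧ IsRat x ∧ ∀ k, |x k| ≤ 1}

/-- The set `Q_s` of tuples `(x_1,f_1,…,x_n,f_n)` of elements of `Q` with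
`range(x_i) ∪ range(f_i) < range(x_{i+1}) ∪ range(f_{i+1})`. -/
def QsSet : Set (List (c00 × c00)) :=
  {φ | φ ≠ [] ∧ (∀ p ∈ φ, p.1 ∈ Qset ∧ p.2 ∈ Qset) ∧
    φ.Chain' fun p q => suppLt (p.1.support ∪ p.2.support) (q.1.support ∪ q.2.support)}

/-- The parameters `(m_j)`, `(n_j)`, `(s_j)` of the construction. -/
structure Params where
  m : ℕ → ℕ
  n : ℕ → ℕ
  s : ℕ → ℕ
  m_one : m 1 = 2
  m_rec : ∀ j, 1 ≤ j → m (j + 1) = m j ^ 5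
  n_one : n 1 = 4
  n_rec : ∀ j, 1 ≤ j → n (j + 1) = (4 * n j) ^ s j
  s_pos : ∀ j, 1 ≤ j → 1 ≤ s j
  s_big : ∀ j, 1 ≤ j → m (j + 1) ^ 3 ≤ 2 ^ s j

/-- The coding function `σ`: an injection from `Q_s` into the even positive integers,
increasing along extensions, with `max (range(x_n) ∪ range(f_n)) ≤ m_{σ(φ)}^{1/2}`. -/
structure Coding (P : Params) where
  σ : List (c00 × c00) → ℕ
  even_pos : ∀ φ ∈ QsSet, ∃ k, 1 ≤ k ∧ σ φ = 2 * k
  inj : Set.InjOn σ QsSet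
  mono : ∀ φ ∈ QsSet, φ.dropLast ∈ QsSet → σ φ.dropLast < σ φ
  bound : ∀ φ ∈ QsSet, ∀ p ∈ φ.getLast?, ∀ a ∈ p.1.support ∪ p.2.support,
    (a : ℝ) ≤ Real.sqrt (P.m (σ φ))

/-- `x_i`: the `i`-th (1-indexed) vector entry of a tuple in `Q_s`. -/
def xC (φ : List (c00 × c00)) (i : ℕ) : c00 := (φ.getD (i - 1) (0, 0)).1

/-- `f_i`: the `i`-th (1-indexed) functional entry of a tuple in `Q_s`. -/
def fC (φ : List (c00 × c00)) (i : ℕ) : c00 := (φ.getD (i - 1) (0, 0)).2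

/-- `φ_i = (x_1,f_1,…,x_i,f_i)`: the prefix of length `i`. -/
def pref (φ : List (c00 × c00)) (i : ℕ) : List (c00 × c00) := φ.take i

/-- `K_0 = {± e_n^*}`. -/
def K0set : Set c00 := {f | ∃ k, f = e k ∨ f = -e k}

/-- The condition on `(x_1, f_1)` of a special sequence of length `2k`. -/
def headCond (P : Params) (k : ℕ) (x f : c00) : Prop :=
  ∃ j, 1 ≤ j ∧ (2 * k : ℝ) < Real.sqrt (P.m (2 * j)) ∧
    ∃ F : Finset ℕ, F.card = P.n (2 * j) ∧
      x = ((P.n (2 * j) : ℝ))⁻¹ • ∑ l ∈ F, e l ∧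
      f = ((P.m (2 * j) : ℝ))⁻¹ • ∑ l ∈ F, e l

/-- `φ` is a special sequence (of length `2k` for some `k ≥ 1`). -/
def IsSpecialSeq (P : Params) (C : Coding P) (φ : List (c00 × c00)) : Prop :=
  φ ∈ QsSet ∧ ∃ k, 1 ≤ k ∧ φ.length = 2 * k ∧
    headCond P k (xC φ 1) (fC φ 1) ∧
    (∀ i, 1 ≤ i → i ≤ k →
      (∀ t, |fC φ (2 * i) t| ≤ ((P.m (C.σ (pref φ (2 * i - 1))) : ℝ))⁻¹) ∧
      |dot (fC φ (2 * i)) (xC φ (2 * i))| ≤ ((P.m (C.σ (pref φ (2 * i - 1))) : ℝ))⁻¹) ∧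
    (∀ i, 1 ≤ i → i < k →
      ∃ F : Finset ℕ, F.card = P.n (C.σ (pref φ (2 * i))) ∧
        xC φ (2 * i + 1) = ((P.n (C.σ (pref φ (2 * i))) : ℝ))⁻¹ • ∑ l ∈ F, e l ∧
        fC φ (2 * i + 1) = ((P.m (C.σ (pref φ (2 * i))) : ℝ))⁻¹ • ∑ l ∈ F, e l)

/-- The condition defining the coefficients `λ_{f'_{2i}}`. -/
def lamCond (P : Params) (C : Coding P) (j : ℕ) (φ : List (c00 × c00))
    (f' : ℕ → c00) (lam : ℕ → ℝ) (i : ℕ) : Prop :=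
  (dot (f' i) (xC φ (2 * i)) ≠ 0 →
    lam i = dot (f' i) (((P.m (C.σ (pref φ (2 * i - 1))) : ℝ)) • xC φ (2 * i))) ∧
  (dot (f' i) (xC φ (2 * i)) = 0 →
    lam i = 1 / (P.n (2 * j + 1) : ℝ) ^ 2 ∨ lam i = -(1 / (P.n (2 * j + 1) : ℝ) ^ 2))

/-- The set `K_{n,φ}^{2j+1}` built from a special sequence `φ` over a previous level `prev`. -/
def KphiSet (P : Params) (C : Coding P) (prev : ℕ → Set c00) (j : ℕ)
    (φ : List (c00 × c00)) : Set c00 :=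
  {f | ∃ ε : ℝ, (ε = 1 ∨ ε = -1) ∧ ∃ E : Set ℕ, IsInterval E ∧
    ∃ (f' : ℕ → c00) (lam : ℕ → ℝ),
      (∀ i, 1 ≤ i → 2 * i ≤ P.n (2 * j + 1) →
        f' i ∈ prev (C.σ (pref φ (2 * i - 1))) ∧
        (f' i).support = (fC φ (2 * i)).support ∧
        (∀ g ∈ prev (C.σ (pref φ (2 * i - 1))),
          |dot g (xC φ (2 * i))| ≤ ((P.m (C.σ (pref φ (2 * i - 1))) : ℝ))⁻¹) ∧
        lamCond P C j φ f' lam i) ∧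
      f = (ε * ((P.m (2 * j + 1) : ℝ))⁻¹) •
        restrictTo E (∑ i ∈ Finset.Icc 1 (P.n (2 * j + 1) / 2),
          (lam i • fC φ (2 * i - 1) + f' i))}

/-- Admissibility of a special sequence `φ` at a given level:
`f_{2i} ∈ K_{n-1}^{σ(φ_{2i-1})}`. -/
def SpecialAdm (P : Params) (C : Coding P) (prev : ℕ → Set c00) (j : ℕ)
    (φ : List (c00 × c00)) : Prop :=
  IsSpecialSeq P C φ ∧ φ.length = P.n (2 * j + 1) ∧
    ∀ i, 1 ≤ i → 2 * i ≤ P.n (2 * j + 1) →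
      fC φ (2 * i) ∈ prev (C.σ (pref φ (2 * i - 1)))

/-- The even operation `(A_{n_{2j}}, 1/m_{2j})`. -/
def evenStep (P : Params) (prev : ℕ → Set c00) (j : ℕ) : Set c00 :=
  {f | ∃ fs : List c00, fs ≠ [] ∧ fs.length ≤ P.n (2 * j) ∧
    (∀ g ∈ fs, ∃ j', g ∈ prev j') ∧ fs.Chain' blockLt ∧
    f = ((P.m (2 * j) : ℝ))⁻¹ • fs.sum}

/-- The odd (special functional) operation. -/
def oddStep (P : Params) (C : Coding P) (prev : ℕ → Set c00) (j : ℕ) : Set c00 :=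
  ⋃ φ ∈ {ψ : List (c00 × c00) | SpecialAdm P C prev j ψ}, KphiSet P C prev j φ

/-- The inductively defined family `K_n^j`. -/
def KF (P : Params) (C : Coding P) : ℕ → ℕ → Set c00
  | 0, j => if j = 0 then K0set else ∅
  | N + 1, j =>
      if j = 0 then K0set
      else if j = 1 then ∅
      else if j % 2 = 0 then KF P C N j ∪ evenStep P (KF P C N) (j / 2)
      else KF P C N j ∪ oddStep P C (KF P C N) (j / 2)

/-- The norming set `K = ⋃_n ⋃_j K_n^j` of the space `X_ius`. -/
def Kset (P : Params) (C : Coding P) : Set c00 := ⋃ N, ⋃ j, KF P C N j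

/-- `f` has weight `w(f) = m_j`, i.e. `f ∈ K_n^j` for some `n ≥ 1`. -/
def KHasWeight (P : Params) (C : Coding P) (f : c00) (w : ℕ) : Prop :=
  ∃ N j, 1 ≤ j ∧ f ∈ KF P C (N + 1) j ∧ w = P.m j

/-- The norm of `X_ius` on `c00`: `‖x‖ = sup {f(x) : f ∈ K}`. -/
def normK (P : Params) (C : Coding P) (x : c00) : ℝ :=
  sSup ((fun f => dot f x) '' Kset P C)

/-- The set `K̃`. -/
def Ktilde (P : Params) : Set c00 :=
  K0set ∪ {f | ∃ j, 1 ≤ j ∧ ∃ F : Finset ℕ, F.card ≤ P.n (2 * j) ∧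
    ∃ ε : ℕ → ℝ, (∀ i, ε i = 1 ∨ ε i = -1) ∧
      f = ((P.m (2 * j) : ℝ))⁻¹ • ∑ i ∈ F, ε i • e i} ∪ {0}

/-- `‖x‖_K̃ = sup {f(x) : f ∈ K̃}`. -/
def normKt (P : Params) (x : c00) : ℝ := sSup ((fun f => dot f x) '' Ktilde P)

/-- The norming family `W_n` of the auxiliary mixed Tsirelson space
`X_u = T[(A_{4n_j},1/m_j)_j]`. -/
def WF (P : Params) : ℕ → Set c00
  | 0 => K0set ∪ {0}
  | N + 1 => WF P N ∪ {f | ∃ j, 1 ≤ j ∧ ∃ fs : List c00, fs ≠ [] ∧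
      fs.length ≤ 4 * P.n j ∧ (∀ g ∈ fs, g ∈ WF P N) ∧ fs.Chain' blockLt ∧
      f = ((P.m j : ℝ))⁻¹ • fs.sum}

/-- The norming set `W` of `X_u`. -/
def Wset (P : Params) : Set c00 := ⋃ N, WF P N

/-- The norming family of `X_{u,k} = T[(A_{4n_j},1/m_j)_{j=1}^k]`. -/
def WFk (P : Params) (k : ℕ) : ℕ → Set c00
  | 0 => K0set ∪ {0}
  | N + 1 => WFk P k N ∪ {f | ∃ j, 1 ≤ j ∧ j ≤ k ∧ ∃ fs : List c00, fs ≠ [] ∧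
      fs.length ≤ 4 * P.n j ∧ (∀ g ∈ fs, g ∈ WFk P k N) ∧ fs.Chain' blockLt ∧
      f = ((P.m j : ℝ))⁻¹ • fs.sum}

/-- The norming set `W^{(k)}` of `X_{u,k}`. -/
def Wk (P : Params) (k : ℕ) : Set c00 := ⋃ N, WFk P k N

/-- `f ∈ W` has weight `w(f) = m_j`. -/
def WHasWeight (P : Params) (f : c00) (w : ℕ) : Prop :=
  ∃ j, 1 ≤ j ∧ w = P.m j ∧ ∃ fs : List c00, fs ≠ [] ∧ fs.length ≤ 4 * P.n j ∧
    (∀ g ∈ fs, g ∈ Wset P) ∧ fs.Chain' blockLt ∧ f = ((P.m j : ℝ))⁻¹ • fs.sum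

/-- `f` admits a tree in `W` all of whose non-terminal nodes have weight `≠ w0`. -/
inductive WTreeAvoid (P : Params) (w0 : ℕ) : c00 → Prop
  | leaf (f : c00) (hf : f ∈ K0set ∪ {0}) : WTreeAvoid P w0 f
  | node (j : ℕ) (hj : 1 ≤ j) (hw : P.m j ≠ w0) (fs : List c00) (hne : fs ≠ [])
      (hlen : fs.length ≤ 4 * P.n j) (hch : fs.Chain' blockLt)
      (hmem : ∀ g ∈ fs, WTreeAvoid P w0 g) :
      WTreeAvoid P w0 (((P.m j : ℝ))⁻¹ • fs.sum)

/-- `q_j = 1/log_{4n_j}(m_j) = log (4 n_j) / log (m_j)`. -/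
def qexp (P : Params) (j : ℕ) : ℝ := Real.log (4 * (P.n j : ℝ)) / Real.log (P.m j : ℝ)

/-- `p_j = 1/(1 - log_{4n_j}(m_j))`, the conjugate exponent of `q_j`. -/
def pexp (P : Params) (j : ℕ) : ℝ :=
  1 / (1 - Real.log (P.m j : ℝ) / Real.log (4 * (P.n j : ℝ)))

/-- `x` is a `C`-`ℓ_1^k` average. -/
def IsL1Avg (P : Params) (C : Coding P) (Cc : ℝ) (k : ℕ) (x : c00) : Prop :=
  ∃ xs : ℕ → c00, (∀ i, i + 1 < k → blockLt (xs i) (xs (i + 1))) ∧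
    (∀ i < k, normK P C (xs i) ≤ Cc * normK P C x) ∧
    x = ((k : ℝ))⁻¹ • ∑ i ∈ Finset.range k, xs i

/-- `(x_k)_{k<N}` is a `(C,ε)`-rapidly increasing sequence. -/
def IsRIS (P : Params) (C : Coding P) (Cc ε : ℝ) (N : ℕ) (x : ℕ → c00) : Prop :=
  (∀ k, k + 1 < N → blockLt (x k) (x (k + 1))) ∧
  ∃ jk : ℕ → ℕ, StrictMono jk ∧ (∀ k, 1 ≤ jk k) ∧
    ∀ k < N, normK P C (x k) ≤ Cc ∧
      ((rangeI (x k)).card : ℝ) / (P.m (jk (k + 1)) : ℝ) < ε ∧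
      ∀ f ∈ Kset P C, ∀ w, KHasWeight P C f w → (w : ℝ) < (P.m (jk k) : ℝ) →
        |dot f (x k)| ≤ Cc / (w : ℝ)

/-- `(x_k)_{k<N}` is a `(C,ε)`-rapidly increasing sequence of `ℓ_1` averages. -/
def IsRISofAvgs (P : Params) (C : Coding P) (Cc ε : ℝ) (N : ℕ) (x : ℕ → c00) : Prop :=
  (∀ k, k + 1 < N → blockLt (x k) (x (k + 1))) ∧
  ∃ jk : ℕ → ℕ, StrictMono jk ∧ (∀ k, 1 ≤ jk k) ∧
    ∀ k < N, normK P C (x k) = 1 ∧ IsL1Avg P C (2 * Cc / 3) (P.n (jk k)) (x k) ∧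
      ((rangeI (x k)).card : ℝ) / (P.m (jk (k + 1)) : ℝ) < ε

/-- `χ` is a depended sequence of length `n_{2j+1}`. -/
def IsDependedSeq (P : Params) (C : Coding P) (j : ℕ) (χ : List (c00 × c00)) : Prop :=
  χ.length = P.n (2 * j + 1) ∧
  ∃ φ : List (c00 × c00), IsSpecialSeq P C φ ∧ φ.length = P.n (2 * j + 1) ∧
    (∀ i, 1 ≤ i → i ≤ P.n (2 * j + 1) → fC χ i = fC φ i) ∧
    (∀ i, 1 ≤ i → 2 * i - 1 ≤ P.n (2 * j + 1) → xC χ (2 * i - 1) = xC φ (2 * i - 1)) ∧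
    (∀ i, 1 ≤ i → 2 * i ≤ P.n (2 * j + 1) →
      (xC φ (2 * i)).support = (xC χ (2 * i)).support ∧
      normK P C (xC φ (2 * i) - xC χ (2 * i)) ≤
        1 / (P.n (C.σ (pref φ (2 * i - 1))) : ℝ) ^ 2 ∧
      (∃ c : ℝ, 0 < c ∧ c < 1 ∧ ∃ xs : ℕ → c00,
        IsRISofAvgs P C 3 (1 / (P.n (C.σ (pref φ (2 * i - 1))) : ℝ))
          (P.n (C.σ (pref φ (2 * i - 1)))) xs ∧
        xC χ (2 * i) = (c / (P.n (C.σ (pref φ (2 * i - 1))) : ℝ)) •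
          ∑ l ∈ Finset.range (P.n (C.σ (pref φ (2 * i - 1)))), xs l) ∧
      1 / (12 * (P.m (C.σ (pref φ (2 * i - 1))) : ℝ)) ≤
        dot (fC χ (2 * i)) (xC χ (2 * i)))

/-- The canonical map `c00 → X` sending `x` to `∑ k, x k • e' k`. -/
def lift {X : Type*} [AddCommGroup X] [Module ℝ X] (e' : ℕ → X) (x : c00) : X :=
  x.sum fun k a => a • e' k

/-- `X`, together with the sequence `e'`, is a realization of the space `X_ius`:
the completion of `c00` under `‖·‖_K`, with `e'` the natural basis. -/
structure IsIusRep (P : Params) (C : Coding P) {X : Type*} [NormedAddCommGroup X]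
    [NormedSpace ℝ X] (e' : ℕ → X) : Prop where
  norm_eq : ∀ x : c00, ‖lift e' x‖ = normK P C x
  dense : DenseRange (lift e')

/-- A bounded operator `S` is strictly singular: its restriction to no
infinite-dimensional closed subspace is an isomorphism onto its image
(i.e. it is bounded below on no such subspace). -/
def StrictlySingular {X : Type*} [NormedAddCommGroup X] [NormedSpace ℝ X]
    (S : X →L[ℝ] X) : Prop :=
  ∀ Y : Submodule ℝ X, IsClosed (Y : Set X) → ¬ FiniteDimensional ℝ Y →
    ¬ ∃ c : ℝ, 0 < c ∧ ∀ y ∈ Y, c * ‖y‖ ≤ ‖S y‖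

end Ius
namespace Ius

/-- The data of a node of type (b) (a special functional node) in the analysis of an
element of `K`: the special sequence `φ`, the sign `ε`, the interval `E`, the
functionals `f'_{2i}` and the coefficients `λ_{f'_{2i}}`. -/
structure BNode where
  j : ℕ
  φ : List (c00 × c00)
  eps : ℝ
  E : Set ℕ
  f' : ℕ → c00
  lam : ℕ → ℝ

/-- The pieces of a (b)-node: `(i, true)` is `E f_{2i-1}` and `(i, false)` is `E f'_{2i}`. -/
def BNode.piece (D : BNode) (p : ℕ × Bool) : c00 :=
  if p.2 then restrictTo D.E (fC D.φ (2 * p.1 - 1)) else restrictTo D.E (D.f' p.1)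

open Classical in
/-- The positions (in support order) of the nonzero pieces of a (b)-node. -/
noncomputable def BNode.posList (P : Params) (D : BNode) : List (ℕ × Bool) :=
  (((List.range (P.n (2 * D.j + 1) / 2)).map fun i =>
    [((i + 1 : ℕ), true), ((i + 1 : ℕ), false)]).flatten).filter
      fun p => decide (D.piece p ≠ 0)

/-- The value of a (b)-node:
`(ε/m_{2j+1}) E(λ_{f'_2} f_1 + f'_2 + ⋯ + λ_{f'_{n_{2j+1}}} f_{n_{2j+1}-1} + f'_{n_{2j+1}})`. -/
noncomputable def BNode.value (P : Params) (D : BNode) : c00 :=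
  (D.eps * ((P.m (2 * D.j + 1) : ℝ))⁻¹) •
    restrictTo D.E (∑ i ∈ Finset.Icc 1 (P.n (2 * D.j + 1) / 2),
      (D.lam i • fC D.φ (2 * i - 1) + D.f' i))

/-- Validity of a (b)-node: its value belongs to `K_φ`. -/
def BNode.Valid (P : Params) (C : Coding P) (D : BNode) : Prop :=
  1 ≤ D.j ∧ (D.eps = 1 ∨ D.eps = -1) ∧ IsInterval D.E ∧
  ∃ N, SpecialAdm P C (KF P C N) D.j D.φ ∧
    ∀ i, 1 ≤ i → 2 * i ≤ P.n (2 * D.j + 1) →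
      D.f' i ∈ KF P C N (C.σ (pref D.φ (2 * i - 1))) ∧
      (D.f' i).support = (fC D.φ (2 * i)).support ∧
      (∀ g ∈ KF P C N (C.σ (pref D.φ (2 * i - 1))),
        |dot g (xC D.φ (2 * i))| ≤ ((P.m (C.σ (pref D.φ (2 * i - 1))) : ℝ))⁻¹) ∧
      lamCond P C D.j D.φ D.f' D.lam i

open Classical in
/-- The number of immediate successors of the node `α` in the index tree `A`. -/
noncomputable def deg (A : Finset (List ℕ)) (α : List ℕ) : ℕ :=
  (A.filter fun β => ∃ i, β = α ++ [i]).card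

/-- A tree `(f_α)_{α ∈ A}` of a functional of `K`: a finite family indexed by a finite
rooted tree `A` (addresses are lists of child indices; the root is `[]`), whose
terminal nodes carry elements of `K_0` and whose non-terminal nodes are obtained
either by an `(A_{n_{2j}}, 1/m_{2j})` operation (case (a), `B α = none`) or from a
special sequence (case (b), `B α = some D`), the children being the nonzero pieces
in their support order. -/
structure KTree (P : Params) (C : Coding P) where
  A : Finset (List ℕ)
  F : List ℕ → c00
  B : List ℕ → Option BNode
  root_mem : [] ∈ A
  downward : ∀ (α : List ℕ) (i : ℕ), α ++ [i] ∈ A → α ∈ A ∧ ∀ i' < i, α ++ [i'] ∈ A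
  mem : ∀ α ∈ A, F α ∈ Kset P C
  leaf : ∀ α ∈ A, α ++ [0] ∉ A → F α ∈ K0set
  nodeA : ∀ α ∈ A, α ++ [0] ∈ A → B α = none →
    ∃ j, 1 ≤ j ∧ deg A α ≤ P.n (2 * j) ∧
      (((List.range (deg A α)).map fun i => F (α ++ [i])).Chain' blockLt) ∧
      F α = ((P.m (2 * j) : ℝ))⁻¹ • ∑ i ∈ Finset.range (deg A α), F (α ++ [i])
  nodeB : ∀ α ∈ A, ∀ D, B α = some D → α ++ [0] ∈ A ∧ BNode.Valid P C D ∧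
    F α = BNode.value P D ∧
    ((List.range (deg A α)).map fun i => F (α ++ [i])) =
      (BNode.posList P D).map D.piece

/-- The children `β ++ [r]`, `β ++ [r+1]` form a depended couple with respect to the
root functional: they are `E f_{2i-1}` and `E f'_{2i}` of a (b)-node `β`. -/
def IsDepCoupleIdx (P : Params) (C : Coding P) (T : KTree P C) (β : List ℕ) (r : ℕ) :
    Prop :=
  β ∈ T.A ∧ ∃ D, T.B β = some D ∧ ∃ i,
    (BNode.posList P D)[r]? = some (i, true) ∧
    (BNode.posList P D)[r + 1]? = some (i, false)

/-- `α ∈ F_{f,x_k}`: the couple `(f_α, f_{α^+})` is a depended couple with respect to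
the root functional and `x_k`. -/
def InFF (P : Params) (C : Coding P) (T : KTree P C) (x : ℕ → c00) (k : ℕ)
    (α : List ℕ) : Prop :=
  ∃ β r, α = β ++ [r] ∧ α ∈ T.A ∧ β ++ [r + 1] ∈ T.A ∧ IsDepCoupleIdx P C T β r ∧
    (k = 0 ∨ maxSupp (x (k - 1)) < minSupp (T.F α)) ∧
    minSupp (T.F α) ≤ maxSupp (x k) ∧
    minSupp (x (k + 1)) ≤ maxSupp (T.F (β ++ [r + 1]))

/-- `F_f = ⋃_k F_{f,x_k}`. -/
def FFall (P : Params) (C : Coding P) (T : KTree P C) (x : ℕ → c00) : Set (List ℕ) :=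
  {α | ∃ k, InFF P C T x k α}

/-- `y_k`: the restriction of `x_k` to `⋃_{α ∈ F_f} supp f_α`. -/
noncomputable def yRes (P : Params) (C : Coding P) (T : KTree P C) (x : ℕ → c00)
    (k : ℕ) : c00 :=
  restrictTo (⋃ α ∈ FFall P C T x, ((T.F α).support : Set ℕ)) (x k)

/-!
Let `M` be the prefix-minimal nodes `α ∈ F_f` with `supp f_α ∩ supp x_k ≠ ∅`. Their functionals
have pairwise disjoint supports covering `supp y_k`, and on `supp f_α` the root `f` equals
`c_α f_α` with `|c_α| ≤ 2^{-|α|}`, since every edge of the tree contributes a factor `1/m_j`,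
possibly times some `|λ| ≤ 1`. Each `f_α = E f_{2i-1}` is a restricted average
`(1/m_{2j}) ∑_{l ∈ F} e_l` with `#F ≤ n_{2j}`, so `|f_α(z)| ≤ ‖z‖_K̃`. Hence
`|f(y_k)| ≤ (∑_{α ∈ M} 2^{-|α|}) σ_k`.

Order `M` by supports. A node `α ∈ M` after the first belongs to `F_{f,x_k}`, so its partner
`f_{α^+}` reaches into `x_{k+1}`; a later node `α'` of `M` still meets `x_k`, and no node lies
between two consecutive siblings, so `α'` is a proper descendant of `α^+`. Thus the depths of the
nodes after the first are distinct and positive, and `∑_{α ∈ M} 2^{-|α|} ≤ 1 + 1`.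
-/

section Vectors

lemma e_apply (k t : ℕ) : e k t = if k = t then 1 else 0 := by
  simp [e, Finsupp.single_apply]

lemma e_ne_zero (k : ℕ) : e k ≠ 0 :=
  Finsupp.single_ne_zero.mpr one_ne_zero

lemma ne_zero_of_mem_K0set {g : c00} (hg : g ∈ K0set) : g ≠ 0 := by
  obtain ⟨k, rfl | rfl⟩ := hg <;> simp [e_ne_zero]

lemma sum_smul_e_apply (F : Finset ℕ) (s : ℕ → ℝ) (t : ℕ) :
    (∑ l ∈ F, s l • e l) t = if t ∈ F then s t else 0 := by
  simp [Finsupp.finsetSum_apply, e_apply]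

lemma restrictTo_apply (E : Set ℕ) (x : c00) (t : ℕ) :
    restrictTo E x t = if t ∈ E then x t else 0 := by
  simp [restrictTo, Finsupp.filter_apply]

lemma mem_support_restrictTo {E : Set ℕ} {x : c00} {t : ℕ} :
    t ∈ (restrictTo E x).support ↔ t ∈ E ∧ t ∈ x.support := by
  simp only [Finsupp.mem_support_iff, restrictTo_apply]
  split_ifs with h <;> simp [h]

lemma restrictTo_e (E : Set ℕ) (k : ℕ) : restrictTo E (e k) = if k ∈ E then e k else 0 := by
  ext t
  by_cases hk : k ∈ E <;> by_cases hkt : k = t <;> simp_all [restrictTo_apply, e_apply]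

lemma restrictTo_neg (E : Set ℕ) (x : c00) : restrictTo E (-x) = -restrictTo E x := by
  ext t
  simp only [restrictTo_apply, Finsupp.neg_apply]
  split_ifs <;> simp

lemma restrictTo_smul_sum_smul_e (E : Set ℕ) (c : ℝ) (F : Finset ℕ) (s : ℕ → ℝ) :
    restrictTo E (c • ∑ l ∈ F, s l • e l) = c • ∑ l ∈ F.filter (· ∈ E), s l • e l := by
  ext t
  simp only [restrictTo_apply, Finsupp.smul_apply, sum_smul_e_apply, Finset.mem_filter]
  split_ifs <;> simp_all

lemma dot_eq_sum_of_support_subset (f x : c00) {S : Finset ℕ} (h : x.support ⊆ S) :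
    dot f x = ∑ t ∈ S, f t * x t :=
  Finset.sum_subset h fun t _ ht => by simp [Finsupp.notMem_support_iff.mp ht]

lemma dot_neg_left (f x : c00) : dot (-f) x = -dot f x := by
  simp [dot, Finsupp.sum]

lemma dot_smul_right (f x : c00) (c : ℝ) : dot f (c • x) = c * dot f x := by
  rw [dot, Finsupp.sum_smul_index (by simp), dot, Finsupp.sum, Finsupp.sum, Finset.mul_sum]
  exact Finset.sum_congr rfl fun t _ => by ring

lemma dot_restrictTo_comm (g : c00) (E : Set ℕ) (z : c00) :
    dot g (restrictTo E z) = dot (restrictTo E g) z := by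
  rw [dot_eq_sum_of_support_subset g _ fun t ht => (mem_support_restrictTo.mp ht).2, dot]
  refine Finset.sum_congr rfl fun t _ => ?_
  simp only [restrictTo_apply]
  split_ifs <;> simp

lemma dot_restrictTo_eq_sum (g y : c00) (S : Finset ℕ) :
    dot g (restrictTo S y) = ∑ t ∈ S, g t * y t := by
  rw [dot_eq_sum_of_support_subset g _ fun t ht => (mem_support_restrictTo.mp ht).1]
  exact Finset.sum_congr rfl fun t ht => by simp [restrictTo_apply, ht]

lemma dot_eq_sum_dot_restrictTo {ι : Type*} (g y : c00) {M : Finset ι} {S : ι → Finset ℕ}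
    (hdisj : (M : Set ι).PairwiseDisjoint S) (hcover : y.support ⊆ M.biUnion S) :
    dot g y = ∑ i ∈ M, dot g (restrictTo (S i) y) := by
  rw [dot_eq_sum_of_support_subset g y hcover, Finset.sum_biUnion hdisj]
  simp only [dot_restrictTo_eq_sum]

lemma dot_restrictTo_of_eqOn {f g : c00} {S : Finset ℕ} {c : ℝ} (h : ∀ t ∈ S, f t = c * g t)
    (y : c00) : dot f (restrictTo S y) = c * dot g (restrictTo S y) := by
  simp only [dot_restrictTo_eq_sum, Finset.mul_sum]
  exact Finset.sum_congr rfl fun t ht => by rw [h t ht, mul_assoc]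

end Vectors

section Supports

lemma minSupp_le {z : c00} {t : ℕ} (ht : t ∈ z.support) : minSupp z ≤ t := by
  rw [minSupp, ← Finset.coe_min' ⟨t, ht⟩, WithTop.untopD_coe]
  exact Finset.min'_le _ _ ht

lemma le_maxSupp {z : c00} {t : ℕ} (ht : t ∈ z.support) : t ≤ maxSupp z := by
  rw [maxSupp, ← Finset.coe_max' ⟨t, ht⟩, WithBot.unbotD_coe]
  exact Finset.le_max' _ _ ht

lemma minSupp_mem {z : c00} (h : z ≠ 0) : minSupp z ∈ z.support := by
  have hne := Finsupp.support_nonempty_iff.mpr h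
  rw [minSupp, ← Finset.coe_min' hne, WithTop.untopD_coe]
  exact Finset.min'_mem _ _

lemma maxSupp_mem {z : c00} (h : z ≠ 0) : maxSupp z ∈ z.support := by
  have hne := Finsupp.support_nonempty_iff.mpr h
  rw [maxSupp, ← Finset.coe_max' hne, WithBot.unbotD_coe]
  exact Finset.max'_mem _ _

lemma blockLt.disjoint {a b : c00} (h : blockLt a b) : Disjoint a.support b.support :=
  Finset.disjoint_left.mpr fun t hta htb => lt_irrefl t (h t hta t htb)

lemma suppLt.trans {A B C : Finset ℕ} (hAB : suppLt A B) (hBC : suppLt B C) (hB : B.Nonempty) :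
    suppLt A C := by
  obtain ⟨u, hu⟩ := hB
  exact fun s hs t ht => (hAB s hs u hu).trans (hBC u hu t ht)

lemma blockLt.trans {a b c : c00} (hab : blockLt a b) (hbc : blockLt b c) (hb : b ≠ 0) :
    blockLt a c :=
  suppLt.trans hab hbc (Finsupp.support_nonempty_iff.mpr hb)

lemma blockLt.not_blockLt {a b : c00} (h : blockLt a b) (ha : a ≠ 0) (hb : b ≠ 0) :
    ¬ blockLt b a := by
  intro h'
  obtain ⟨t, ht⟩ := Finsupp.support_nonempty_iff.mpr hb
  exact lt_irrefl t (blockLt.trans h' h ha t ht t ht)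

lemma blockLt.mono {a b a' b' : c00} (h : blockLt a b) (ha : a'.support ⊆ a.support)
    (hb : b'.support ⊆ b.support) : blockLt a' b' :=
  fun s hs t ht => h s (ha hs) t (hb ht)

lemma not_blockLt_of_support_subset {a b : c00} (hab : a.support ⊆ b.support) (ha : a ≠ 0) :
    ¬ blockLt a b ∧ ¬ blockLt b a := by
  obtain ⟨t, ht⟩ := Finsupp.support_nonempty_iff.mpr ha
  exact ⟨fun h => lt_irrefl t (h t ht t (hab ht)), fun h => lt_irrefl t (h t (hab ht) t ht)⟩

lemma pairwise_suppLt_of_isChain {α : Type*} (u : α → Finset ℕ) {l : List α}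
    (hl : l.IsChain fun a b => suppLt (u a) (u b)) (hne : ∀ a ∈ l, (u a).Nonempty) :
    l.Pairwise fun a b => suppLt (u a) (u b) := by
  induction l with
  | nil => exact List.Pairwise.nil
  | cons a l ih =>
    have hl' := ih hl.tail fun b hb => hne b (List.mem_cons_of_mem a hb)
    refine List.Pairwise.cons (fun c hc => ?_) hl'
    cases l with
    | nil => simp at hc
    | cons b l =>
      have hab := (List.isChain_cons_cons.mp hl).1
      rcases List.mem_cons.mp hc with rfl | hc
      · exact hab
      · exact suppLt.trans hab ((List.pairwise_cons.mp hl').1 c hc) (hne b (by simp))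

lemma IsBlockSeq.lt_of_lt {x : ℕ → c00} (hx : IsBlockSeq x) {a b s t : ℕ} (hab : a < b)
    (hs : s ∈ (x a).support) (ht : t ∈ (x b).support) : s < t := by
  induction b, hab using Nat.le_induction generalizing t with
  | base => exact (hx a).2 s hs t ht
  | succ b hab ih =>
    exact (ih (maxSupp_mem (hx b).1)).trans ((hx b).2 _ (maxSupp_mem (hx b).1) t ht)

end Supports

section Parameters

variable (P : Params)

lemma Params.two_le_m {j : ℕ} (hj : 1 ≤ j) : 2 ≤ P.m j := by
  induction j, hj using Nat.le_induction with
  | base => rw [P.m_one]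
  | succ j hj ih => rw [P.m_rec j hj]; exact ih.trans (Nat.le_self_pow (by norm_num) _)

lemma Params.one_le_n {j : ℕ} (hj : 1 ≤ j) : 1 ≤ P.n j := by
  induction j, hj using Nat.le_induction with
  | base => rw [P.n_one]; norm_num
  | succ j hj ih => rw [P.n_rec j hj]; exact Nat.one_le_pow _ _ (by omega)

lemma Params.inv_m_le_half {j : ℕ} (hj : 1 ≤ j) : ((P.m j : ℝ))⁻¹ ≤ 1 / 2 := by
  rw [one_div]
  exact inv_anti₀ two_pos (by exact_mod_cast P.two_le_m hj)

end Parameters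

section Ktilde

variable (P : Params)

lemma smul_sum_smul_e_mem_Ktilde {j : ℕ} (hj : 1 ≤ j) {F : Finset ℕ} (hF : F.card ≤ P.n (2 * j))
    {s : ℕ → ℝ} (hs : ∀ i, s i = 1 ∨ s i = -1) :
    ((P.m (2 * j) : ℝ))⁻¹ • ∑ l ∈ F, s l • e l ∈ Ktilde P :=
  Or.inl (Or.inr ⟨j, hj, F, hF, s, hs, rfl⟩)

lemma abs_apply_le_one_of_mem_Ktilde {g : c00} (hg : g ∈ Ktilde P) (t : ℕ) : |g t| ≤ 1 := by
  rcases hg with (⟨k, rfl | rfl⟩ | ⟨j, hj, F, -, s, hs, rfl⟩) | rfl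
  · rw [e_apply]; split_ifs <;> simp
  · rw [Finsupp.neg_apply, abs_neg, e_apply]; split_ifs <;> simp
  · have hm := P.inv_m_le_half (j := 2 * j) (by omega)
    have hst : |if t ∈ F then s t else 0| ≤ 1 := by
      split_ifs
      · rcases hs t with h | h <;> simp [h]
      · simp
    rw [Finsupp.smul_apply, sum_smul_e_apply, smul_eq_mul, abs_mul, abs_inv, Nat.abs_cast]
    nlinarith [abs_nonneg (if t ∈ F then s t else 0)]
  · simp

lemma bddAbove_dot_Ktilde (z : c00) : BddAbove ((fun f => dot f z) '' Ktilde P) := by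
  refine ⟨∑ t ∈ z.support, |z t|, ?_⟩
  rintro _ ⟨g, hg, rfl⟩
  refine Finset.sum_le_sum fun t _ => ?_
  calc g t * z t ≤ |g t| * |z t| := (le_abs_self _).trans (abs_mul _ _).le
    _ ≤ |z t| := mul_le_of_le_one_left (abs_nonneg _) (abs_apply_le_one_of_mem_Ktilde P hg t)

lemma dot_le_normKt {g : c00} (hg : g ∈ Ktilde P) (z : c00) : dot g z ≤ normKt P z :=
  le_csSup (bddAbove_dot_Ktilde P z) ⟨g, hg, rfl⟩

lemma normKt_nonneg (z : c00) : 0 ≤ normKt P z := by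
  simpa [dot] using dot_le_normKt P (g := 0) (Or.inr rfl) z

lemma abs_dot_le_normKt {g : c00} (hg : g ∈ Ktilde P) (hg' : -g ∈ Ktilde P) (z : c00) :
    |dot g z| ≤ normKt P z := by
  have := dot_le_normKt P hg' z
  rw [dot_neg_left] at this
  exact abs_le.mpr ⟨by linarith, dot_le_normKt P hg z⟩

lemma abs_dot_smul_sum_e_le_normKt {j : ℕ} (hj : 1 ≤ j) {F : Finset ℕ}
    (hF : F.card ≤ P.n (2 * j)) (z : c00) :
    |dot (((P.m (2 * j) : ℝ))⁻¹ • ∑ l ∈ F, e l) z| ≤ normKt P z := by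
  have h := smul_sum_smul_e_mem_Ktilde P hj hF (s := fun _ => 1) fun _ => Or.inl rfl
  have h' := smul_sum_smul_e_mem_Ktilde P hj hF (s := fun _ => -1) fun _ => Or.inr rfl
  simp only [one_smul, neg_smul, Finset.sum_neg_distrib, smul_neg] at h h'
  exact abs_dot_le_normKt P h h' z

lemma restrictTo_mem_Ktilde {g : c00} (hg : g ∈ Ktilde P) (E : Set ℕ) :
    restrictTo E g ∈ Ktilde P := by
  rcases hg with (⟨k, rfl | rfl⟩ | ⟨j, hj, F, hF, s, hs, rfl⟩) | rfl
  · rw [restrictTo_e]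
    split_ifs
    exacts [Or.inl (Or.inl ⟨k, Or.inl rfl⟩), Or.inr rfl]
  · rw [restrictTo_neg, restrictTo_e]
    split_ifs
    exacts [Or.inl (Or.inl ⟨k, Or.inr rfl⟩), by rw [neg_zero]; exact Or.inr rfl]
  · rw [restrictTo_smul_sum_smul_e]
    exact smul_sum_smul_e_mem_Ktilde P hj ((Finset.card_filter_le _ _).trans hF) hs
  · have h0 : restrictTo E 0 = 0 := by ext t; simp [restrictTo_apply]
    rw [h0]
    exact Or.inr rfl

lemma normKt_restrictTo_le (E : Set ℕ) (z : c00) : normKt P (restrictTo E z) ≤ normKt P z := by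
  refine Real.sSup_le ?_ (normKt_nonneg P z)
  rintro _ ⟨g, hg, rfl⟩
  simp only [dot_restrictTo_comm]
  exact dot_le_normKt P (restrictTo_mem_Ktilde P hg E) z

end Ktilde

section SpecialSequences

variable {P : Params} {C : Coding P} {φ : List (c00 × c00)}

lemma fC_eq_getElem {a : ℕ} (ha : 1 ≤ a) (han : a ≤ φ.length) : fC φ a = φ[a - 1].2 := by
  rw [fC, List.getD_eq_getElem]

lemma blockLt_fC (hφ : φ ∈ QsSet) {a b : ℕ} (ha : 1 ≤ a) (hab : a < b) (hb : b ≤ φ.length) :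
    blockLt (fC φ a) (fC φ b) := by
  obtain ⟨-, hQ, hch⟩ := hφ
  have hpw := pairwise_suppLt_of_isChain (fun p : c00 × c00 => p.1.support ∪ p.2.support) hch
    fun p hp => (Finsupp.support_nonempty_iff.mpr (hQ p hp).1.1).mono Finset.subset_union_left
  rw [fC_eq_getElem ha (by omega), fC_eq_getElem (by omega) hb]
  have h := List.pairwise_iff_getElem.mp hpw (a - 1) (b - 1) (by omega) (by omega) (by omega)
  exact fun s hs t ht => h s (Finset.mem_union_right _ hs) t (Finset.mem_union_right _ ht)

lemma fC_apply_eq_zero (hφ : φ ∈ QsSet) {a b t : ℕ} (ha : 1 ≤ a) (han : a ≤ φ.length)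
    (hb : 1 ≤ b) (hbn : b ≤ φ.length) (hab : a ≠ b) (ht : t ∈ (fC φ a).support) :
    fC φ b t = 0 := by
  rw [← Finsupp.notMem_support_iff]
  intro htb
  rcases hab.lt_or_gt with h | h
  · exact Finset.disjoint_left.mp (blockLt_fC hφ ha h hbn).disjoint ht htb
  · exact Finset.disjoint_left.mp (blockLt_fC hφ hb h han).disjoint htb ht

lemma pref_mem_QsSet (hφ : φ ∈ QsSet) {t : ℕ} (ht : 1 ≤ t) : pref φ t ∈ QsSet := by
  obtain ⟨hne, hQ, hch⟩ := hφ
  refine ⟨?_, fun p hp => hQ p (List.mem_of_mem_take hp), hch.take t⟩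
  cases φ with
  | nil => exact absurd rfl hne
  | cons p φ => obtain ⟨t, rfl⟩ := Nat.exists_eq_add_of_le' ht; simp [pref]

lemma Coding.two_le_m_σ (C : Coding P) (hφ : φ ∈ QsSet) : 2 ≤ P.m (C.σ φ) := by
  obtain ⟨k, hk, hσ⟩ := C.even_pos φ hφ
  exact hσ ▸ P.two_le_m (by omega)

end SpecialSequences

namespace BNode

variable {P : Params} {C : Coding P} {D : BNode}

def pieceIndex (p : ℕ × Bool) : ℕ := if p.2 then 2 * p.1 - 1 else 2 * p.1

lemma Valid.qs (hv : D.Valid P C) : D.φ ∈ QsSet :=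
  hv.2.2.2.choose_spec.1.1.1

lemma Valid.length_eq (hv : D.Valid P C) : D.φ.length = P.n (2 * D.j + 1) :=
  hv.2.2.2.choose_spec.1.2.1

lemma Valid.support_f' (hv : D.Valid P C) {i : ℕ} (hi1 : 1 ≤ i)
    (hi2 : 2 * i ≤ P.n (2 * D.j + 1)) : (D.f' i).support = (fC D.φ (2 * i)).support :=
  (hv.2.2.2.choose_spec.2 i hi1 hi2).2.1

lemma Valid.lam_ne_zero_and_abs_le_one (hv : D.Valid P C) {i : ℕ} (hi1 : 1 ≤ i)
    (hi2 : 2 * i ≤ P.n (2 * D.j + 1)) : D.lam i ≠ 0 ∧ |D.lam i| ≤ 1 := by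
  obtain ⟨hj, -, -, N, hadm, hcl⟩ := hv
  obtain ⟨hmem, -, hbound, hlam, hlam0⟩ := hcl i hi1 hi2
  by_cases hd : dot (D.f' i) (xC D.φ (2 * i)) = 0
  · have hn : (1 : ℝ) ≤ P.n (2 * D.j + 1) := by exact_mod_cast P.one_le_n (by omega)
    have habs : |D.lam i| = 1 / (P.n (2 * D.j + 1) : ℝ) ^ 2 := by
      rcases hlam0 hd with h | h <;> simp [h]
    refine ⟨fun h => by simp [h] at habs; nlinarith, ?_⟩
    rw [habs, div_le_one (by positivity)]
    nlinarith
  · have hM : (2 : ℝ) ≤ P.m (C.σ (pref D.φ (2 * i - 1))) := by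
      exact_mod_cast C.two_le_m_σ (pref_mem_QsSet hadm.1.1 (by omega))
    rw [hlam hd, dot_smul_right]
    refine ⟨mul_ne_zero (by positivity) hd, ?_⟩
    rw [abs_mul, Nat.abs_cast]
    calc _ ≤ (P.m (C.σ (pref D.φ (2 * i - 1))) : ℝ) * (P.m (C.σ (pref D.φ (2 * i - 1))) : ℝ)⁻¹ :=
          mul_le_mul_of_nonneg_left (hbound _ hmem) (by positivity)
      _ = 1 := mul_inv_cancel₀ (by positivity)

lemma Valid.f'_apply_eq_zero (hv : D.Valid P C) {i a t : ℕ} (hi1 : 1 ≤ i)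
    (hi2 : 2 * i ≤ P.n (2 * D.j + 1)) (ha : 1 ≤ a) (han : a ≤ P.n (2 * D.j + 1))
    (hai : a ≠ 2 * i) (ht : t ∈ (fC D.φ a).support) : D.f' i t = 0 := by
  rw [← Finsupp.notMem_support_iff, hv.support_f' hi1 hi2, Finsupp.notMem_support_iff]
  exact fC_apply_eq_zero hv.qs ha (hv.length_eq ▸ han) (by omega) (hv.length_eq ▸ hi2) hai ht

lemma Valid.mem_of_mem_support_piece (hv : D.Valid P C) {p : ℕ × Bool} (hp1 : 1 ≤ p.1)
    (hp2 : 2 * p.1 ≤ P.n (2 * D.j + 1)) {t : ℕ}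
    (ht : t ∈ (D.piece p).support) : t ∈ D.E ∧ t ∈ (fC D.φ (pieceIndex p)).support := by
  rcases p with ⟨i, _ | _⟩
  · obtain ⟨hE, hf⟩ := mem_support_restrictTo.mp ht
    exact ⟨hE, by simpa [pieceIndex, hv.support_f' hp1 hp2] using hf⟩
  · exact mem_support_restrictTo.mp ht

lemma Valid.blockLt_piece (hv : D.Valid P C) {p q : ℕ × Bool} (hp1 : 1 ≤ p.1)
    (hp2 : 2 * p.1 ≤ P.n (2 * D.j + 1)) (hq1 : 1 ≤ q.1) (hq2 : 2 * q.1 ≤ P.n (2 * D.j + 1))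
    (hpq : pieceIndex p < pieceIndex q) : blockLt (D.piece p) (D.piece q) := by
  have h := blockLt_fC hv.qs (a := pieceIndex p) (b := pieceIndex q)
    (by simp only [pieceIndex]; split_ifs <;> omega) hpq
    (by rw [hv.length_eq]; simp only [pieceIndex]; split_ifs <;> omega)
  exact fun s hs t ht => h s (hv.mem_of_mem_support_piece hp1 hp2 hs).2 t
    (hv.mem_of_mem_support_piece hq1 hq2 ht).2

lemma value_apply (t : ℕ) :
    D.value P t = D.eps * ((P.m (2 * D.j + 1) : ℝ))⁻¹ * (if t ∈ D.E then
      ∑ i ∈ Finset.Icc 1 (P.n (2 * D.j + 1) / 2), (D.lam i * fC D.φ (2 * i - 1) t + D.f' i t)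
      else 0) := by
  simp [value, restrictTo_apply, Finsupp.finsetSum_apply]

lemma Valid.sum_apply_eq_of_mem_support_piece (hv : D.Valid P C) {p : ℕ × Bool}
    (hp1 : 1 ≤ p.1) (hp2 : 2 * p.1 ≤ P.n (2 * D.j + 1)) {t : ℕ}
    (ht : t ∈ (D.piece p).support) :
    ∑ i ∈ Finset.Icc 1 (P.n (2 * D.j + 1) / 2), (D.lam i * fC D.φ (2 * i - 1) t + D.f' i t) =
      (if p.2 then D.lam p.1 else 1) * D.piece p t := by
  obtain ⟨hE, hta⟩ := hv.mem_of_mem_support_piece hp1 hp2 ht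
  have ha : 1 ≤ pieceIndex p ∧ pieceIndex p ≤ P.n (2 * D.j + 1) := by
    simp only [pieceIndex]; split_ifs <;> omega
  have hodd : ∀ i, 1 ≤ i → 2 * i ≤ P.n (2 * D.j + 1) → pieceIndex p ≠ 2 * i - 1 →
      fC D.φ (2 * i - 1) t = 0 := fun i hi1 hi2 hne =>
    fC_apply_eq_zero hv.qs ha.1 (hv.length_eq ▸ ha.2) (by omega) (by rw [hv.length_eq]; omega)
      hne hta
  have heven : ∀ i, 1 ≤ i → 2 * i ≤ P.n (2 * D.j + 1) → pieceIndex p ≠ 2 * i →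
      D.f' i t = 0 := fun i hi1 hi2 hne => hv.f'_apply_eq_zero hi1 hi2 ha.1 ha.2 hne hta
  rw [Finset.sum_eq_single_of_mem p.1 (Finset.mem_Icc.mpr ⟨hp1, by omega⟩)]
  · rcases p with ⟨i, _ | _⟩
    · simp [piece, restrictTo_apply, hE, hodd i hp1 hp2 (by simp [pieceIndex]; omega)]
    · simp [piece, restrictTo_apply, hE, heven i hp1 hp2 (by simp [pieceIndex]; omega)]
  · intro i hi hne
    have hi2 : 2 * i ≤ P.n (2 * D.j + 1) := by have := (Finset.mem_Icc.mp hi).2; omega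
    rw [hodd i (Finset.mem_Icc.mp hi).1 hi2 (by simp only [pieceIndex]; split_ifs <;> omega),
      heven i (Finset.mem_Icc.mp hi).1 hi2 (by simp only [pieceIndex]; split_ifs <;> omega)]
    simp

lemma Valid.exists_value_apply_eq_mul_piece (hv : D.Valid P C) {p : ℕ × Bool} (hp1 : 1 ≤ p.1)
    (hp2 : 2 * p.1 ≤ P.n (2 * D.j + 1)) :
    ∃ c : ℝ, c ≠ 0 ∧ |c| ≤ 1 / 2 ∧ ∀ t ∈ (D.piece p).support, D.value P t = c * D.piece p t := by
  have hε : |D.eps| = 1 := by rcases hv.2.1 with h | h <;> simp [h]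
  have hm := P.inv_m_le_half (j := 2 * D.j + 1) (by omega)
  have hm0 : (P.m (2 * D.j + 1) : ℝ) ≠ 0 :=
    Nat.cast_ne_zero.mpr (by have := P.two_le_m (j := 2 * D.j + 1) (by omega); omega)
  have hlam : (if p.2 then D.lam p.1 else 1) ≠ 0 ∧ |if p.2 then D.lam p.1 else 1| ≤ 1 := by
    split_ifs
    · exact hv.lam_ne_zero_and_abs_le_one hp1 hp2
    · simp
  refine ⟨D.eps * ((P.m (2 * D.j + 1) : ℝ))⁻¹ * (if p.2 then D.lam p.1 else 1),
    mul_ne_zero (mul_ne_zero (fun h => by simp [h] at hε) (inv_ne_zero hm0)) hlam.1, ?_,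
    fun t ht => ?_⟩
  · rw [abs_mul, abs_mul, hε, one_mul, abs_inv, Nat.abs_cast]
    calc _ ≤ ((P.m (2 * D.j + 1) : ℝ))⁻¹ * 1 :=
          mul_le_mul_of_nonneg_left hlam.2 (by positivity)
      _ ≤ 1 / 2 := by rwa [mul_one]
  · rw [value_apply, if_pos (hv.mem_of_mem_support_piece hp1 hp2 ht).1,
      hv.sum_apply_eq_of_mem_support_piece hp1 hp2 ht]
    ring

lemma mem_posList {p : ℕ × Bool} (hp : p ∈ D.posList P) :
    D.piece p ≠ 0 ∧ 1 ≤ p.1 ∧ 2 * p.1 ≤ P.n (2 * D.j + 1) := by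
  simp only [posList, List.mem_filter, List.mem_flatten, List.mem_map, List.mem_range,
    decide_eq_true_eq] at hp
  obtain ⟨⟨_, ⟨i, hi, rfl⟩, hp⟩, hne⟩ := hp
  simp only [List.mem_cons, List.not_mem_nil, or_false] at hp
  rcases hp with rfl | rfl <;> exact ⟨hne, by simp, by simp; omega⟩

lemma pairwise_pieceIndex_posList :
    (D.posList P).Pairwise fun p q => pieceIndex p < pieceIndex q := by
  refine List.Pairwise.sublist List.filter_sublist (List.pairwise_flatten.mpr ⟨?_, ?_⟩)
  · simp [pieceIndex]
  · rw [List.pairwise_map]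
    exact List.pairwise_lt_range.imp fun hab => by simp [pieceIndex]; omega

lemma Valid.fC_odd_eq (hv : D.Valid P C) {i : ℕ} (hi1 : 1 ≤ i) (hi2 : 2 * i ≤ P.n (2 * D.j + 1)) :
    ∃ w F, 1 ≤ w ∧ F.card = P.n (2 * w) ∧
      fC D.φ (2 * i - 1) = ((P.m (2 * w) : ℝ))⁻¹ • ∑ l ∈ F, e l := by
  obtain ⟨-, -, -, N, ⟨⟨hQ, kk, -, hlen, hhead, -, hodd⟩, hlen', -⟩, -⟩ := hv
  rcases hi1.eq_or_lt with rfl | hi1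
  · obtain ⟨w, hw, -, F, hF, -, hf⟩ := hhead
    exact ⟨w, F, hw, hF, hf⟩
  · obtain ⟨F, hF, -, hf⟩ := hodd (i - 1) (by omega) (by omega)
    obtain ⟨w, hw, hσ⟩ := C.even_pos _ (pref_mem_QsSet hQ (t := 2 * (i - 1)) (by omega))
    rw [hσ] at hF hf
    exact ⟨w, F, hw, hF, by rwa [show 2 * (i - 1) + 1 = 2 * i - 1 by omega] at hf⟩

lemma Valid.abs_dot_piece_odd_le_normKt (hv : D.Valid P C) {i : ℕ} (hi1 : 1 ≤ i)
    (hi2 : 2 * i ≤ P.n (2 * D.j + 1)) (z : c00) :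
    |dot (D.piece (i, true)) z| ≤ normKt P z := by
  obtain ⟨w, F, hw, hF, hf⟩ := hv.fC_odd_eq hi1 hi2
  rw [piece, if_pos rfl, ← dot_restrictTo_comm, hf]
  exact (abs_dot_smul_sum_e_le_normKt P hw hF.le _).trans (normKt_restrictTo_le P _ _)

end BNode

namespace KTree

variable {P : Params} {C : Coding P} (T : KTree P C)

lemma mem_of_append_mem {α : List ℕ} (ρ : List ℕ) (h : α ++ ρ ∈ T.A) : α ∈ T.A := by
  induction ρ using List.reverseRecOn with
  | nil => simpa using h
  | append_singleton ρ i ih => exact ih (T.downward _ i (by simpa using h)).1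

lemma mem_of_isPrefix {δ α : List ℕ} (h : δ <+: α) (hα : α ∈ T.A) : δ ∈ T.A := by
  obtain ⟨ρ, rfl⟩ := h
  exact T.mem_of_append_mem ρ hα

lemma child_mem_iff_lt_deg {α : List ℕ} {i : ℕ} : α ++ [i] ∈ T.A ↔ i < deg T.A α := by
  have hinj : Function.Injective fun i : ℕ => α ++ [i] := fun a b h => by simpa using h
  constructor
  · intro hi
    have hsub : (Finset.range (i + 1)).image (fun i' => α ++ [i']) ⊆
        T.A.filter fun β => ∃ i, β = α ++ [i] := by
      intro β hβ
      obtain ⟨i', hi', rfl⟩ := Finset.mem_image.mp hβ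
      refine Finset.mem_filter.mpr ⟨?_, i', rfl⟩
      rcases (Nat.lt_succ_iff.mp (Finset.mem_range.mp hi')).lt_or_eq with h | rfl
      exacts [(T.downward α i hi).2 i' h, hi]
    have := Finset.card_le_card hsub
    rwa [Finset.card_image_of_injective _ hinj, Finset.card_range] at this
  · intro hi
    by_contra hnot
    have hsub : (T.A.filter fun β => ∃ i, β = α ++ [i]) ⊆
        (Finset.range i).image fun i' => α ++ [i'] := by
      intro β hβ
      obtain ⟨hβA, i', rfl⟩ := Finset.mem_filter.mp hβ
      refine Finset.mem_image.mpr ⟨i', Finset.mem_range.mpr (lt_of_not_ge fun h => ?_), rfl⟩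
      rcases h.lt_or_eq with h | rfl
      exacts [hnot ((T.downward α i' hβA).2 i h), hnot hβA]
    have := Finset.card_le_card hsub
    rw [Finset.card_image_of_injective _ hinj, Finset.card_range] at this
    exact absurd hi (not_lt.mpr this)

theorem induction_on {p : List ℕ → Prop}
    (h : ∀ α ∈ T.A, (∀ i, α ++ [i] ∈ T.A → p (α ++ [i])) → p α) : ∀ α ∈ T.A, p α := by
  suffices ∀ n α, α ∈ T.A → T.A.sup List.length - α.length = n → p α from
    fun α hα => this _ α hα rfl
  intro n
  induction n using Nat.strong_induction_on with
  | _ n ih =>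
    rintro α hα rfl
    refine h α hα fun i hi => ih _ ?_ _ hi rfl
    have := Finset.le_sup (f := List.length) hi
    simp only [List.length_append, List.length_singleton] at this ⊢
    omega

lemma length_posList {β : List ℕ} (hβ : β ∈ T.A) {D : BNode} (hD : T.B β = some D) :
    (D.posList P).length = deg T.A β := by
  simpa using (congrArg List.length (T.nodeB β hβ D hD).2.2.2).symm

lemma F_child_eq_piece {β : List ℕ} (hβ : β ∈ T.A) {D : BNode} (hD : T.B β = some D) {r : ℕ}
    {p : ℕ × Bool} (hr : (D.posList P)[r]? = some p) : T.F (β ++ [r]) = D.piece p := by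
  have h := congrArg (·[r]?) (T.nodeB β hβ D hD).2.2.2
  have hlt : r < deg T.A β := T.length_posList hβ hD ▸ (List.getElem?_eq_some_iff.mp hr).1
  simpa [List.getElem?_range, hlt, hr] using h

lemma blockLt_children_of_ne_zero {α : List ℕ} (hα : α ∈ T.A)
    (h0 : ∀ i, α ++ [i] ∈ T.A → T.F (α ++ [i]) ≠ 0) {i i' : ℕ} (hii : i < i')
    (hi' : α ++ [i'] ∈ T.A) : blockLt (T.F (α ++ [i])) (T.F (α ++ [i'])) := by
  have hi'd := T.child_mem_iff_lt_deg.mp hi'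
  cases hB : T.B α with
  | none =>
    obtain ⟨j, -, -, hch, -⟩ := T.nodeA α hα (T.child_mem_iff_lt_deg.mpr (by omega)) hB
    have hpw := pairwise_suppLt_of_isChain Finsupp.support hch (by
      simp only [List.mem_map, List.mem_range]
      rintro _ ⟨i'', hi'', rfl⟩
      exact Finsupp.support_nonempty_iff.mpr (h0 i'' (T.child_mem_iff_lt_deg.mpr hi'')))
    have := List.pairwise_iff_getElem.mp hpw i i' (by simp; omega) (by simpa using hi'd) hii
    simp only [List.getElem_map, List.getElem_range] at this
    exact this
  | some D =>
    have hlen := T.length_posList hα hB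
    have hv := (T.nodeB α hα D hB).2.1
    obtain ⟨-, hp1, hp2⟩ := BNode.mem_posList (List.getElem_mem (l := D.posList P) (n := i) (by omega))
    obtain ⟨-, hq1, hq2⟩ := BNode.mem_posList (List.getElem_mem (l := D.posList P) (n := i') (by omega))
    rw [T.F_child_eq_piece hα hB (List.getElem?_eq_getElem (by omega)),
      T.F_child_eq_piece hα hB (List.getElem?_eq_getElem (by omega))]
    exact hv.blockLt_piece hp1 hp2 hq1 hq2
      (List.pairwise_iff_getElem.mp BNode.pairwise_pieceIndex_posList i i' _ _ hii)

lemma exists_coeff_child_of_ne_zero {α : List ℕ} (hα : α ∈ T.A)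
    (h0 : ∀ i, α ++ [i] ∈ T.A → T.F (α ++ [i]) ≠ 0) {i : ℕ} (hi : α ++ [i] ∈ T.A) :
    ∃ c : ℝ, c ≠ 0 ∧ |c| ≤ 1 / 2 ∧
      ∀ t ∈ (T.F (α ++ [i])).support, T.F α t = c * T.F (α ++ [i]) t := by
  have hid := T.child_mem_iff_lt_deg.mp hi
  cases hB : T.B α with
  | none =>
    obtain ⟨j, hj, -, -, hsum⟩ := T.nodeA α hα (T.child_mem_iff_lt_deg.mpr (by omega)) hB
    have hm := P.two_le_m (j := 2 * j) (by omega)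
    refine ⟨((P.m (2 * j) : ℝ))⁻¹, by positivity, ?_, fun t ht => ?_⟩
    · rw [abs_inv, Nat.abs_cast]; exact P.inv_m_le_half (by omega)
    rw [hsum, Finsupp.smul_apply, Finsupp.finsetSum_apply, smul_eq_mul,
      Finset.sum_eq_single_of_mem i (Finset.mem_range.mpr hid)]
    intro i' hi' hne
    have hi'A := T.child_mem_iff_lt_deg.mpr (Finset.mem_range.mp hi')
    rw [← Finsupp.notMem_support_iff]
    rcases hne.lt_or_gt with h | h
    · exact Finset.disjoint_right.mp (T.blockLt_children_of_ne_zero hα h0 h hi).disjoint ht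
    · exact Finset.disjoint_left.mp (T.blockLt_children_of_ne_zero hα h0 h hi'A).disjoint ht
  | some D =>
    obtain ⟨-, hv, hval, -⟩ := T.nodeB α hα D hB
    have hlt : i < (D.posList P).length := by rw [T.length_posList hα hB]; omega
    obtain ⟨-, hp1, hp2⟩ := BNode.mem_posList (List.getElem_mem hlt)
    rw [T.F_child_eq_piece hα hB (List.getElem?_eq_getElem hlt), hval]
    exact hv.exists_value_apply_eq_mul_piece hp1 hp2

lemma F_ne_zero : ∀ α ∈ T.A, T.F α ≠ 0 := by
  refine T.induction_on fun α hα ih => ?_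
  by_cases h00 : α ++ [0] ∈ T.A
  · obtain ⟨c, hc, -, hcα⟩ := T.exists_coeff_child_of_ne_zero hα ih h00
    obtain ⟨t, ht⟩ := Finsupp.support_nonempty_iff.mpr (ih 0 h00)
    intro h
    have := hcα t ht
    rw [h, Finsupp.coe_zero, Pi.zero_apply, zero_eq_mul] at this
    exact this.elim hc (Finsupp.mem_support_iff.mp ht)
  · exact ne_zero_of_mem_K0set (T.leaf α hα h00)

lemma blockLt_children {α : List ℕ} (hα : α ∈ T.A) {i i' : ℕ} (hii : i < i')
    (hi' : α ++ [i'] ∈ T.A) : blockLt (T.F (α ++ [i])) (T.F (α ++ [i'])) :=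
  T.blockLt_children_of_ne_zero hα (fun _ hi => T.F_ne_zero _ hi) hii hi'

lemma exists_coeff_child {α : List ℕ} (hα : α ∈ T.A) {i : ℕ} (hi : α ++ [i] ∈ T.A) :
    ∃ c : ℝ, c ≠ 0 ∧ |c| ≤ 1 / 2 ∧
      ∀ t ∈ (T.F (α ++ [i])).support, T.F α t = c * T.F (α ++ [i]) t :=
  T.exists_coeff_child_of_ne_zero hα (fun _ hi => T.F_ne_zero _ hi) hi

lemma support_subset_of_isPrefix {δ α : List ℕ} (h : δ <+: α) (hα : α ∈ T.A) :
    (T.F α).support ⊆ (T.F δ).support := by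
  obtain ⟨ρ, rfl⟩ := h
  induction ρ using List.reverseRecOn with
  | nil => simp
  | append_singleton ρ i ih =>
    rw [← List.append_assoc] at hα ⊢
    have hδρ := (T.downward _ i hα).1
    obtain ⟨c, hc, -, hcα⟩ := T.exists_coeff_child hδρ hα
    refine fun t ht => ih hδρ ?_
    rw [Finsupp.mem_support_iff, hcα t ht]
    exact mul_ne_zero hc (Finsupp.mem_support_iff.mp ht)

lemma not_blockLt_of_isPrefix {δ α : List ℕ} (h : δ <+: α) (hα : α ∈ T.A) :
    ¬ blockLt (T.F α) (T.F δ) ∧ ¬ blockLt (T.F δ) (T.F α) :=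
  not_blockLt_of_support_subset (T.support_subset_of_isPrefix h hα) (T.F_ne_zero α hα)

lemma exists_root_coeff {α : List ℕ} (hα : α ∈ T.A) :
    ∃ c : ℝ, |c| ≤ (1 / 2) ^ α.length ∧ ∀ t ∈ (T.F α).support, T.F [] t = c * T.F α t := by
  induction α using List.reverseRecOn with
  | nil => exact ⟨1, by simp, fun t _ => (one_mul _).symm⟩
  | append_singleton δ i ih =>
    have hδ := (T.downward δ i hα).1
    obtain ⟨c₀, hc₀, hc₀δ⟩ := ih hδ
    obtain ⟨c₁, -, hc₁, hc₁δ⟩ := T.exists_coeff_child hδ hα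
    refine ⟨c₀ * c₁, ?_, fun t ht => ?_⟩
    · rw [abs_mul, List.length_append, List.length_singleton, pow_succ]
      exact mul_le_mul hc₀ hc₁ (abs_nonneg _) (by positivity)
    · rw [hc₀δ t (T.support_subset_of_isPrefix (List.prefix_append _ _) hα ht), hc₁δ t ht,
        mul_assoc]

lemma blockLt_of_lt {δ ρ ρ' : List ℕ} {u v : ℕ} (huv : u < v) (hu : δ ++ u :: ρ ∈ T.A)
    (hv : δ ++ v :: ρ' ∈ T.A) : blockLt (T.F (δ ++ u :: ρ)) (T.F (δ ++ v :: ρ')) := by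
  have hu' : δ ++ [u] <+: δ ++ u :: ρ := ⟨ρ, by simp⟩
  have hv' : δ ++ [v] <+: δ ++ v :: ρ' := ⟨ρ', by simp⟩
  exact (T.blockLt_children (T.mem_of_isPrefix ((List.prefix_append δ [u]).trans hu') hu) huv
    (T.mem_of_isPrefix hv' hv)).mono (T.support_subset_of_isPrefix hu' hu)
    (T.support_subset_of_isPrefix hv' hv)

end KTree

lemma exists_fork_of_not_isPrefix {α : Type*} :
    ∀ a b : List α, ¬ a <+: b → ¬ b <+: a →
      ∃ (δ : List α) (u v : α) (ρ ρ' : List α), u ≠ v ∧ a = δ ++ u :: ρ ∧ b = δ ++ v :: ρ'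
  | [], _, h, _ => absurd List.nil_prefix h
  | _ :: _, [], _, h => absurd List.nil_prefix h
  | u :: a, v :: b, h, h' => by
    by_cases huv : u = v
    · subst huv
      obtain ⟨δ, w, w', ρ, ρ', hww, rfl, rfl⟩ := exists_fork_of_not_isPrefix a b
        (fun hab => h (List.cons_prefix_cons.mpr ⟨rfl, hab⟩))
        (fun hba => h' (List.cons_prefix_cons.mpr ⟨rfl, hba⟩))
      exact ⟨u :: δ, w, w', ρ, ρ', hww, rfl, rfl⟩
    · exact ⟨[], u, v, a, b, huv, rfl, rfl⟩

namespace KTree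

variable {P : Params} {C : Coding P} (T : KTree P C)

lemma isPrefix_or_blockLt {α α' : List ℕ} (hα : α ∈ T.A) (hα' : α' ∈ T.A) :
    α <+: α' ∨ α' <+: α ∨ blockLt (T.F α) (T.F α') ∨ blockLt (T.F α') (T.F α) := by
  by_contra! h
  obtain ⟨δ, u, v, ρ, ρ', huv, rfl, rfl⟩ := exists_fork_of_not_isPrefix α α' h.1 h.2.1
  rcases huv.lt_or_gt with huv | huv
  exacts [h.2.2.1 (T.blockLt_of_lt huv hα hα'), h.2.2.2 (T.blockLt_of_lt huv hα' hα)]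

lemma blockLt_or_blockLt_of_isAntichain {M : Set (List ℕ)} (hM : IsAntichain (· <+: ·) M)
    (hMA : ∀ α ∈ M, α ∈ T.A) {α α' : List ℕ} (hα : α ∈ M) (hα' : α' ∈ M) (hne : α ≠ α') :
    blockLt (T.F α) (T.F α') ∨ blockLt (T.F α') (T.F α) := by
  rcases T.isPrefix_or_blockLt (hMA α hα) (hMA α' hα') with h | h | h
  exacts [absurd h (hM hα hα' hne), absurd h (hM hα' hα hne.symm), h]

lemma not_blockLt_between_siblings {β γ : List ℕ} {r : ℕ} (hr : β ++ [r + 1] ∈ T.A)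
    (hγ : γ ∈ T.A) (h1 : blockLt (T.F (β ++ [r])) (T.F γ))
    (h2 : blockLt (T.F γ) (T.F (β ++ [r + 1]))) : False := by
  have hr0 : β ++ [r] ∈ T.A := (T.downward β (r + 1) hr).2 r (by omega)
  have hγ0 := T.F_ne_zero γ hγ
  rcases T.isPrefix_or_blockLt (T.downward β (r + 1) hr).1 hγ with ⟨_ | ⟨u, ρ⟩, rfl⟩ | hγβ | h | h
  · exact (T.not_blockLt_of_isPrefix (δ := β ++ []) ⟨[r], by simp⟩ hr0).1 h1
  · rcases lt_trichotomy u r with hu | rfl | hu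
    · exact (T.blockLt_of_lt hu hγ hr0).not_blockLt hγ0 (T.F_ne_zero _ hr0) h1
    · exact (T.not_blockLt_of_isPrefix ⟨ρ, by simp⟩ hγ).2 h1
    rcases (Nat.succ_le_of_lt hu).eq_or_lt with rfl | hu
    · exact (T.not_blockLt_of_isPrefix ⟨ρ, by simp⟩ hγ).1 h2
    · exact (T.blockLt_of_lt hu hr hγ).not_blockLt (T.F_ne_zero _ hr) hγ0 h2
  · exact (T.not_blockLt_of_isPrefix (hγβ.trans (List.prefix_append β [r])) hr0).1 h1
  · exact (h.mono (T.support_subset_of_isPrefix (List.prefix_append β [r + 1]) hr)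
      subset_rfl).not_blockLt (T.F_ne_zero _ hr) hγ0 h2
  · exact (h.mono subset_rfl (T.support_subset_of_isPrefix (List.prefix_append β [r]) hr0)
      ).not_blockLt hγ0 (T.F_ne_zero _ hr0) h1

end KTree

section DependedCouples

variable {P : Params} {C : Coding P} {T : KTree P C} {x : ℕ → c00} {k : ℕ} {α : List ℕ}

lemma InFF.abs_dot_le_normKt (h : InFF P C T x k α) (z : c00) :
    |dot (T.F α) z| ≤ normKt P z := by
  obtain ⟨β, r, rfl, -, -, ⟨hβ, D, hD, i, hr, -⟩, -⟩ := h
  obtain ⟨-, hi1, hi2⟩ := BNode.mem_posList (List.mem_of_getElem? hr)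
  rw [T.F_child_eq_piece hβ hD hr]
  exact (T.nodeB β hβ D hD).2.1.abs_dot_piece_odd_le_normKt hi1 hi2 z

lemma InFF.one_le_length (h : InFF P C T x k α) : 1 ≤ α.length := by
  obtain ⟨β, r, rfl, -⟩ := h
  simp

lemma InFF.index_eq (hx : IsBlockSeq x) {k' : ℕ} (h : InFF P C T x k' α) {t t₀ : ℕ}
    (ht : t ∈ (T.F α).support) (htk : t ∈ (x k).support) (ht₀ : t₀ ∈ (x k).support)
    (ht₀α : t₀ < minSupp (T.F α)) : k' = k := by
  obtain ⟨β, r, rfl, -, -, -, hprev, hle, -⟩ := h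
  have hmin := minSupp_le ht
  rcases lt_trichotomy k' k with hlt | heq | hgt
  · have := hx.lt_of_lt hlt (maxSupp_mem (hx k').1) ht₀
    omega
  · exact heq
  · have htmax : t ≤ maxSupp (x (k' - 1)) := by
      rcases (Nat.le_sub_one_of_lt hgt).eq_or_lt with h | h
      · exact h ▸ le_maxSupp htk
      · exact (hx.lt_of_lt h htk (maxSupp_mem (hx _).1)).le
    rcases hprev with rfl | hprev <;> omega

lemma InFF.length_lt (hx : IsBlockSeq x) (h : InFF P C T x k α) {α' : List ℕ}
    (hα' : α' ∈ FFall P C T x) {t' : ℕ} (ht' : t' ∈ (T.F α').support)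
    (ht'k : t' ∈ (x k).support) (hlt : blockLt (T.F α) (T.F α')) : α.length < α'.length := by
  obtain ⟨β, r, rfl, hα, hr, ⟨-, D, hD, i, -, hri⟩, -, -, hnext⟩ := h
  obtain ⟨-, β', r', rfl, hα'A, -, ⟨-, D', hD', i', hr'i', -⟩, -⟩ := hα'
  have hne : β' ++ [r'] ≠ β ++ [r + 1] := by
    intro heq
    obtain ⟨rfl, hrr⟩ := List.append_inj' heq rfl
    obtain rfl : r' = r + 1 := by simpa using hrr
    rw [hD, Option.some_inj] at hD'
    subst hD'
    simp [hri] at hr'i'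
  simp only [List.length_append, List.length_singleton, Nat.add_lt_add_iff_right]
  rcases T.isPrefix_or_blockLt hr hα'A with hpre | hpre | h' | h'
  · have hle := hpre.length_le
    have : (β ++ [r + 1]).length ≠ (β' ++ [r']).length := fun h => hne (hpre.eq_of_length h).symm
    simp only [List.length_append, List.length_singleton] at hle this
    omega
  · have hlen : (β' ++ [r']).length ≤ β.length := by
      have := hpre.length_le
      have : (β' ++ [r']).length ≠ (β ++ [r + 1]).length := fun h => hne (hpre.eq_of_length h)
      simp only [List.length_append, List.length_singleton] at *
      omega
    have hβ := List.prefix_of_prefix_length_le hpre (List.prefix_append β [r + 1]) hlen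
    exact absurd hlt (T.not_blockLt_of_isPrefix (hβ.trans (List.prefix_append β [r])) hα).1
  · have h1 := h' _ (maxSupp_mem (T.F_ne_zero _ hr)) _ ht'
    have h2 := hx.lt_of_lt (Nat.lt_add_one k) ht'k (minSupp_mem (hx (k + 1)).1)
    omega
  · exact (T.not_blockLt_between_siblings hr hα'A hlt h').elim

end DependedCouples

lemma sum_half_pow_le_one {ι : Type*} (S : Finset ι) (d : ι → ℕ) (hd : ∀ a ∈ S, 1 ≤ d a)
    (hinj : Set.InjOn d S) : ∑ a ∈ S, (1 / 2 : ℝ) ^ d a ≤ 1 := by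
  set N := (S.image d).sup id
  have hsub : S.image d ⊆ Finset.Ico 1 (N + 1) := by
    intro n hn
    obtain ⟨a, ha, rfl⟩ := Finset.mem_image.mp hn
    exact Finset.mem_Ico.mpr ⟨hd a ha, Nat.lt_succ_of_le (Finset.le_sup (f := id) hn)⟩
  calc ∑ a ∈ S, (1 / 2 : ℝ) ^ d a = ∑ n ∈ S.image d, (1 / 2 : ℝ) ^ n :=
        (Finset.sum_image hinj).symm
    _ ≤ ∑ n ∈ Finset.Ico 1 (N + 1), (1 / 2 : ℝ) ^ n :=
        Finset.sum_le_sum_of_subset_of_nonneg hsub fun _ _ _ => by positivity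
    _ = 1 / 2 * ∑ n ∈ Finset.range N, (1 / 2 : ℝ) ^ n := by
        rw [Finset.sum_Ico_eq_sum_range, Nat.add_sub_cancel, Finset.mul_sum]
        exact Finset.sum_congr rfl fun n _ => by rw [pow_add, pow_one]
    _ ≤ 1 / 2 * 2 := by gcongr; exact sum_geometric_two_le N
    _ = 1 := by norm_num

def minimalPrefixes (G : Finset (List ℕ)) : Finset (List ℕ) :=
  G.filter fun α => ∀ β ∈ G, β <+: α → β = α

lemma isAntichain_minimalPrefixes (G : Finset (List ℕ)) :
    IsAntichain (· <+: ·) (minimalPrefixes G : Set (List ℕ)) :=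
  fun _ hα _ hα' hne hpre => hne ((Finset.mem_filter.mp hα').2 _ (Finset.mem_filter.mp hα).1 hpre)

lemma exists_mem_minimalPrefixes_isPrefix {G : Finset (List ℕ)} {α : List ℕ} (hα : α ∈ G) :
    ∃ β ∈ minimalPrefixes G, β <+: α := by
  obtain ⟨β, hβ, hmin⟩ := (G.filter (· <+: α)).exists_min_image List.length ⟨α, by simp [hα]⟩
  obtain ⟨hβG, hβα⟩ := Finset.mem_filter.mp hβ
  refine ⟨β, Finset.mem_filter.mpr ⟨hβG, fun γ hγ hγβ => hγβ.eq_of_length ?_⟩, hβα⟩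
  exact le_antisymm hγβ.length_le (hmin γ (Finset.mem_filter.mpr ⟨hγ, hγβ.trans hβα⟩))

def FFmeet (P : Params) (C : Coding P) (T : KTree P C) (x : ℕ → c00) (k : ℕ) :
    Finset (List ℕ) :=
  T.A.filter fun α => α ∈ FFall P C T x ∧ ∃ t ∈ (T.F α).support, t ∈ (x k).support

lemma mem_FFmeet {P : Params} {C : Coding P} {T : KTree P C} {x : ℕ → c00} {k : ℕ}
    {α : List ℕ} : α ∈ FFmeet P C T x k ↔
      α ∈ T.A ∧ α ∈ FFall P C T x ∧ ∃ t ∈ (T.F α).support, t ∈ (x k).support :=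
  Finset.mem_filter

namespace KTree

variable {P : Params} {C : Coding P} (T : KTree P C)

lemma support_yRes_subset (x : ℕ → c00) (k : ℕ) :
    (yRes P C T x k).support ⊆
      (minimalPrefixes (FFmeet P C T x k)).biUnion fun α => (T.F α).support := by
  intro t ht
  obtain ⟨htU, htk⟩ := mem_support_restrictTo.mp ht
  obtain ⟨α, hαF, htα⟩ := Set.mem_iUnion₂.mp htU
  obtain ⟨-, -, -, -, hαA, -⟩ := id hαF
  obtain ⟨γ, hγ, hγα⟩ := exists_mem_minimalPrefixes_isPrefix (G := FFmeet P C T x k)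
    (mem_FFmeet.mpr ⟨hαA, hαF, t, htα, htk⟩)
  exact Finset.mem_biUnion.mpr ⟨γ, hγ, T.support_subset_of_isPrefix hγα hαA htα⟩

lemma abs_dot_root_le {M : Finset (List ℕ)} (hMA : ∀ α ∈ M, α ∈ T.A)
    (hM : IsAntichain (· <+: ·) (M : Set (List ℕ))) {y : c00}
    (hcover : y.support ⊆ M.biUnion fun α => (T.F α).support)
    (hnorm : ∀ α ∈ M, ∀ z, |dot (T.F α) z| ≤ normKt P z) :
    |dot (T.F []) y| ≤ (∑ α ∈ M, (1 / 2 : ℝ) ^ α.length) * normKt P y := by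
  have hdisj : (M : Set (List ℕ)).PairwiseDisjoint fun α => (T.F α).support :=
    fun α hα α' hα' hne => (T.blockLt_or_blockLt_of_isAntichain hM hMA hα hα' hne).elim
      blockLt.disjoint fun h => h.disjoint.symm
  rw [dot_eq_sum_dot_restrictTo _ _ hdisj hcover, Finset.sum_mul]
  refine (Finset.abs_sum_le_sum_abs _ _).trans (Finset.sum_le_sum fun α hα => ?_)
  obtain ⟨c, hc, hcα⟩ := T.exists_root_coeff (hMA α hα)
  rw [dot_restrictTo_of_eqOn hcα, abs_mul]
  exact mul_le_mul hc ((hnorm α hα _).trans (normKt_restrictTo_le P _ _)) (abs_nonneg _)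
    (by positivity)

-- Without a node `α₀` in front, `α` could lie in `F_{f,x_{k'}}` for some `k' < k` only.
lemma length_lt_of_blockLt {x : ℕ → c00} (hx : IsBlockSeq x) {k : ℕ} {α₀ α α' : List ℕ}
    (hα₀ : α₀ ∈ FFmeet P C T x k) (hα : α ∈ FFmeet P C T x k) (hα' : α' ∈ FFmeet P C T x k)
    (h₀ : blockLt (T.F α₀) (T.F α)) (hlt : blockLt (T.F α) (T.F α')) :
    α.length < α'.length := by
  obtain ⟨-, -, t₀, ht₀, ht₀k⟩ := mem_FFmeet.mp hα₀
  obtain ⟨hαA, ⟨k', hk'⟩, t, ht, htk⟩ := mem_FFmeet.mp hα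
  obtain ⟨-, hα'F, t', ht', ht'k⟩ := mem_FFmeet.mp hα'
  obtain rfl := hk'.index_eq hx ht htk ht₀k (h₀ _ ht₀ _ (minSupp_mem (T.F_ne_zero α hαA)))
  exact hk'.length_lt hx hα'F ht' ht'k hlt

lemma sum_half_pow_length_le_two {x : ℕ → c00} (hx : IsBlockSeq x) {k : ℕ}
    {M : Finset (List ℕ)} (hMk : M ⊆ FFmeet P C T x k)
    (hM : IsAntichain (· <+: ·) (M : Set (List ℕ))) :
    ∑ α ∈ M, (1 / 2 : ℝ) ^ α.length ≤ 2 := by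
  have hMA : ∀ α ∈ M, α ∈ T.A := fun α hα => (mem_FFmeet.mp (hMk hα)).1
  rcases M.eq_empty_or_nonempty with rfl | hne
  · simp
  obtain ⟨α₁, hα₁, hmin⟩ := M.exists_min_image (fun α => minSupp (T.F α)) hne
  have hfirst : ∀ α ∈ M.erase α₁, blockLt (T.F α₁) (T.F α) := fun α hα =>
    (T.blockLt_or_blockLt_of_isAntichain hM hMA (Finset.mem_of_mem_erase hα) hα₁
      (Finset.ne_of_mem_erase hα)).resolve_left fun h => by
        have := h _ (minSupp_mem (T.F_ne_zero α (hMA α (Finset.mem_of_mem_erase hα)))) _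
          (minSupp_mem (T.F_ne_zero α₁ (hMA α₁ hα₁)))
        exact absurd (hmin α (Finset.mem_of_mem_erase hα)) (not_le.mpr this)
  have hinj : Set.InjOn List.length (M.erase α₁ : Set (List ℕ)) := by
    intro α hα α' hα' hlen
    by_contra hne
    have hαM := hMk (Finset.mem_of_mem_erase hα)
    have hα'M := hMk (Finset.mem_of_mem_erase hα')
    rcases T.blockLt_or_blockLt_of_isAntichain hM hMA (Finset.mem_of_mem_erase hα)
      (Finset.mem_of_mem_erase hα') hne with h | h
    · exact (T.length_lt_of_blockLt hx (hMk hα₁) hαM hα'M (hfirst α hα) h).ne hlen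
    · exact (T.length_lt_of_blockLt hx (hMk hα₁) hα'M hαM (hfirst α' hα') h).ne hlen.symm
  have hrest := sum_half_pow_le_one (M.erase α₁) List.length (fun α hα => by
    obtain ⟨_, h⟩ := (mem_FFmeet.mp (hMk (Finset.mem_of_mem_erase hα))).2.1
    exact h.one_le_length) hinj
  have hα₁le : (1 / 2 : ℝ) ^ α₁.length ≤ 1 := pow_le_one₀ (by norm_num) (by norm_num)
  rw [← Finset.add_sum_erase M _ hα₁]
  linarith

end KTree

theorem statement6_general (P : Params) (C : Coding P) (x : ℕ → c00) (hx : IsBlockSeq x)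
    (sl : ℕ → ℝ) (hsl : ∀ k, normKt P (x k) ≤ sl k)
    (f : c00) (T : KTree P C) (hroot : T.F [] = f) (k : ℕ) :
    |dot f (yRes P C T x k)| ≤ 2 * sl k := by
  set M := minimalPrefixes (FFmeet P C T x k)
  have hMk : M ⊆ FFmeet P C T x k := Finset.filter_subset _ _
  have hM := isAntichain_minimalPrefixes (FFmeet P C T x k)
  subst hroot
  calc |dot (T.F []) (yRes P C T x k)|
      ≤ (∑ α ∈ M, (1 / 2 : ℝ) ^ α.length) * normKt P (yRes P C T x k) :=
        T.abs_dot_root_le (fun α hα => (mem_FFmeet.mp (hMk hα)).1) hM (T.support_yRes_subset x k)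
          fun α hα => let ⟨_, h⟩ := (mem_FFmeet.mp (hMk hα)).2.1; h.abs_dot_le_normKt
    _ ≤ 2 * sl k := mul_le_mul (T.sum_half_pow_length_le_two hx hMk hM)
        ((normKt_restrictTo_le P _ _).trans (hsl k)) (normKt_nonneg P _) (by norm_num)

/-- If `(x_k)` is a block sequence with `‖x_k‖_K̃ ≤ σ_k`, `f ∈ K`
with a tree `(f_α)`, and `y_k` is the restriction of `x_k` to
`⋃_{α ∈ F_f} supp f_α`, then `|f(y_k)| ≤ 2 σ_k`. -/
theorem statement6 (P : Params) (C : Coding P) (x : ℕ → c00) (hx : IsBlockSeq x)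
    (sl : ℕ → ℝ) (hsl : ∀ k, normKt P (x k) ≤ sl k)
    (f : c00) (hf : f ∈ Kset P C) (T : KTree P C) (hroot : T.F [] = f) (k : ℕ) :
    |dot f (yRes P C T x k)| ≤ 2 * sl k :=
  statement6_general P C x hx sl hsl f T hroot k

end Ius
end
end

section
/- With q_j = 1/log_{4n_j}(m_j) = log(4n_j)/log(m_j), the sequence (q_j)_{j≥1} is strictly increasing and tends to infinity. -/
open scoped BigOperators
open Classical

noncomputable section

/-!
Since `m_{j+1} = m_j ^ 5`, the denominator `log m_j` of `q_j` grows by the factor `5` at each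
step, while `4 n_{j+1} ≥ (4 n_j) ^ {s_j}` multiplies the numerator `log (4 n_j)` by at least
`s_j ≥ 15` (as `2 ^ {s_j} ≥ m_j ^ 15 ≥ 2 ^ 15`). Hence `q_{j+1} ≥ 3 q_j`, and with `q_1 = 4 > 0`
the sequence grows geometrically.
-/

namespace Ius

namespace Params

variable (P : Params) {j : ℕ}

lemma two_le_m_s8 (hj : 1 ≤ j) : 2 ≤ P.m j := by
  induction j, hj using Nat.le_induction with
  | base => rw [P.m_one]
  | succ k hk ih => rw [P.m_rec k hk]; exact ih.trans (Nat.le_self_pow (by norm_num) _)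

lemma four_le_n (hj : 1 ≤ j) : 4 ≤ P.n j := by
  induction j, hj using Nat.le_induction with
  | base => rw [P.n_one]
  | succ k hk ih =>
    rw [P.n_rec k hk]
    exact (Nat.le_mul_of_pos_right 4 (by omega)).trans
      (Nat.le_self_pow (by have := P.s_pos k hk; omega) _)

lemma fifteen_le_s (hj : 1 ≤ j) : 15 ≤ P.s j := by
  have h : 2 ^ 15 ≤ 2 ^ P.s j :=
    calc 2 ^ 15 ≤ P.m j ^ 15 := Nat.pow_le_pow_left (P.two_le_m_s8 hj) 15
      _ = P.m (j + 1) ^ 3 := by rw [P.m_rec j hj, ← pow_mul]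
      _ ≤ 2 ^ P.s j := P.s_big j hj
  exact (Nat.pow_le_pow_iff_right one_lt_two).mp h

lemma log_m_succ (hj : 1 ≤ j) :
    Real.log (P.m (j + 1)) = 5 * Real.log (P.m j) := by
  rw [P.m_rec j hj, Nat.cast_pow, Real.log_pow, Nat.cast_ofNat]

lemma log_four_mul_n_succ (hj : 1 ≤ j) :
    Real.log (4 * P.n (j + 1)) = Real.log 4 + P.s j * Real.log (4 * P.n j) := by
  have hn : (0 : ℝ) < P.n j := by exact_mod_cast (P.four_le_n hj).trans_lt' (by norm_num)
  rw [P.n_rec j hj, Nat.cast_pow, Nat.cast_mul, Nat.cast_ofNat,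
    Real.log_mul (by norm_num) (by positivity), Real.log_pow]

end Params

section

variable (P : Params) {j : ℕ}

lemma qexp_one : qexp P 1 = 4 := by
  have h : Real.log (4 * 4) = 4 * Real.log 2 := by
    rw [show (4 : ℝ) * 4 = 2 ^ 4 by norm_num, Real.log_pow, Nat.cast_ofNat]
  rw [qexp, P.n_one, P.m_one, Nat.cast_ofNat, Nat.cast_ofNat, h,
    mul_div_assoc, div_self (Real.log_pos one_lt_two).ne', mul_one]

lemma qexp_pos (hj : 1 ≤ j) : 0 < qexp P j := by
  have hm : (2 : ℝ) ≤ P.m j := by exact_mod_cast P.two_le_m_s8 hj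
  have hn : (4 : ℝ) ≤ P.n j := by exact_mod_cast P.four_le_n hj
  exact div_pos (Real.log_pos (by linarith)) (Real.log_pos (by linarith))

lemma three_mul_qexp_le_qexp_succ (hj : 1 ≤ j) : 3 * qexp P j ≤ qexp P (j + 1) := by
  have hm : (2 : ℝ) ≤ P.m j := by exact_mod_cast P.two_le_m_s8 hj
  have hn : (4 : ℝ) ≤ P.n j := by exact_mod_cast P.four_le_n hj
  have hs : (15 : ℝ) ≤ P.s j := by exact_mod_cast P.fifteen_le_s hj
  have hlog_n : 0 < Real.log (4 * P.n j) := Real.log_pos (by linarith)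
  have hlog_m : 0 < Real.log (P.m j) := Real.log_pos (by linarith)
  have hlog_four : 0 ≤ Real.log 4 := Real.log_nonneg (by norm_num)
  rw [qexp, qexp, P.log_m_succ hj, P.log_four_mul_n_succ hj]
  calc 3 * (Real.log (4 * P.n j) / Real.log (P.m j))
      = 15 * Real.log (4 * P.n j) / (5 * Real.log (P.m j)) := by field_simp; ring
    _ ≤ (Real.log 4 + P.s j * Real.log (4 * P.n j)) / (5 * Real.log (P.m j)) := by
      gcongr
      linarith [mul_le_mul_of_nonneg_right hs hlog_n.le]

end

/-- The sequence `q_j = log(4n_j)/log(m_j)` is strictly increasing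
(on `j ≥ 1`) and tends to infinity. -/
theorem statement8 (P : Params) :
    StrictMonoOn (fun j => qexp P j) {j : ℕ | 1 ≤ j} ∧
    Filter.Tendsto (fun j => qexp P j) Filter.atTop Filter.atTop := by
  have hstep : ∀ k, 3 * qexp P (k + 1) ≤ qexp P (k + 1 + 1) := fun k =>
    three_mul_qexp_le_qexp_succ P (Nat.le_add_left 1 k)
  refine ⟨strictMonoOn_of_lt_succ Set.ordConnected_Ici fun k _ hk _ => ?_,
    (Filter.tendsto_add_atTop_iff_nat 1).mp
      (tendsto_atTop_of_geom_le (by rw [zero_add, qexp_one]; norm_num) (by norm_num) hstep)⟩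
  have hpos := qexp_pos P hk
  rw [Order.succ_eq_add_one]
  linarith [three_mul_qexp_le_qexp_succ P hk]

end Ius
end
end
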